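/- A vector-valued modular function $F$ of type $\rho_M$ (for $M = I\!I_{1,1}(N)\times I\!I_{1,1}$, components indexed by $\mathbb{Z}/N\mathbb{Z}\times\mathbb{Z}/N\mathbb{Z}$) is uniquely determined by its components $F_{0,i}$, $i\in\mathbb{Z}/N\mathbb{Z}$. In particular, if $F_{0,i}=0$ for all $i$, then $F=0$. -/

import Mathlib

/-!
Apply the inverse discrete Fourier transform to each row `l ↦ F a l τ`, giving `F̂ a b τ`.
The `T`- and `S`-laws become `F̂ a b (τ + 1) = F̂ a (b + a) τ` and `F̂ a b (-1/τ) = F̂ b (-a) τ`,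
so the pairs `(a, b)` for which `F̂ a b` is determined form a set stable under `T` and `S`.
It contains every `(0, b)`, because the row `F 0 ·` is given, and Euclid's algorithm on
`a.val` moves any pair to one of these. Hence every row of `F̂`, and so of `F`, is determined.
-/

/-- The normalized exponential `e(z) = exp(2πiz)`. -/
noncomputable def e (z : ℂ) : ℂ := Complex.exp (2 * Real.pi * Complex.I * z)

open ZMod

lemma e_intCast_div (N : ℕ) [NeZero N] (m : ℤ) : e (m / N) = stdAddChar (m : ZMod N) := by
  rw [stdAddChar_coe, e, mul_div_assoc]

lemma e_natCast_div (N : ℕ) [NeZero N] (m : ℕ) : e (m / N) = stdAddChar (m : ZMod N) := by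
  have h := e_intCast_div N m
  rwa [Int.cast_natCast, Int.cast_natCast] at h

lemma im_neg_one_div_pos {τ : ℂ} (hτ : 0 < τ.im) : 0 < (-1 / τ).im := by
  rw [neg_div, one_div, ← inv_neg]
  exact UpperHalfPlane.im_inv_neg_coe_pos ⟨τ, hτ⟩

theorem ZMod.pair_induction {N : ℕ} [NeZero N] {P : ZMod N → ZMod N → Prop}
    (zero : ∀ b, P 0 b) (add : ∀ a b, P a b → P a (b + a)) (rotate : ∀ a b, P a b → P b (-a))
    (a b : ZMod N) : P a b := by
  induction h : a.val using Nat.strong_induction_on generalizing a b with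
  | _ n ih =>
  rcases eq_or_ne a 0 with rfl | ha
  · exact zero b
  have add_nsmul (q : ℕ) (c : ZMod N) (hc : P a c) : P a (c + q • a) := by
    induction q with
    | zero => simpa
    | succ q ihq => rw [succ_nsmul, ← add_assoc]; exact add _ _ ihq
  have ha_pos : 0 < a.val := Nat.pos_of_ne_zero ((val_ne_zero a).2 ha)
  set r := b.val % a.val
  have hr : r < a.val := Nat.mod_lt _ ha_pos
  have hr_val : (r : ZMod N).val = r := val_cast_of_lt (hr.trans (val_lt a))
  have h_r : P r (-a) := ih r (h ▸ hr) _ _ hr_val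
  have h_ar : P a r := by simpa using rotate _ _ (rotate _ _ (rotate _ _ h_r))
  have hb : (r : ZMod N) + (b.val / a.val) • a = b := by
    conv_rhs => rw [← natCast_zmod_val b, ← Nat.div_add_mod b.val a.val]
    push_cast [natCast_zmod_val]
    ring
  rw [← hb]
  exact add_nsmul _ _ h_ar

/-- The transformation laws of type `ρ_M`: the kernel `e((-jk - il)/N)` of the `S`-law is the
product of the Fourier kernels in `j` at `k` and in `l` at `i`. -/
structure IsRhoMModular (N : ℕ) [NeZero N] (F : ZMod N → ZMod N → ℂ → ℂ) : Prop where
  add_one : ∀ i k τ, 0 < τ.im → F i k (τ + 1) = stdAddChar (i * k) * F i k τ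
  neg_one_div : ∀ i k τ, 0 < τ.im →
    F i k (-1 / τ) = (N : ℂ)⁻¹ * 𝓕 (fun j ↦ 𝓕 (fun l ↦ F j l τ) i) k

noncomputable def partialInvDFT {N : ℕ} [NeZero N] (F : ZMod N → ZMod N → ℂ → ℂ) (a : ZMod N)
    (τ : ℂ) : ZMod N → ℂ :=
  𝓕⁻ (fun l ↦ F a l τ)

namespace IsRhoMModular

variable {N : ℕ} [NeZero N] {F G : ZMod N → ZMod N → ℂ → ℂ}

lemma partialInvDFT_add_one (hF : IsRhoMModular N F) (a b : ZMod N) {τ : ℂ} (hτ : 0 < τ.im) :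
    partialInvDFT F a (τ + 1) b = partialInvDFT F a τ (b + a) := by
  simp only [partialInvDFT, invDFT_apply, smul_eq_mul, hF.add_one a _ τ hτ]
  congr 1
  refine Finset.sum_congr rfl fun l _ ↦ ?_
  rw [← mul_assoc, ← AddChar.map_add_eq_mul]
  congr 2
  ring

lemma partialInvDFT_neg_one_div (hF : IsRhoMModular N F) (a b : ZMod N) {τ : ℂ}
    (hτ : 0 < τ.im) : partialInvDFT F a (-1 / τ) b = partialInvDFT F b τ (-a) := by
  have row : (fun k ↦ F a k (-1 / τ)) = (N : ℂ)⁻¹ • 𝓕 (fun j ↦ 𝓕 (fun l ↦ F j l τ) a) := by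
    funext k
    exact hF.neg_one_div a k τ hτ
  rw [partialInvDFT, row, _root_.map_smul, LinearEquiv.symm_apply_apply, partialInvDFT,
    invDFT_apply', neg_neg]
  rfl

theorem eq_of_row_zero_eq (hF : IsRhoMModular N F) (hG : IsRhoMModular N G)
    (h0 : ∀ i τ, 0 < τ.im → F 0 i τ = G 0 i τ) (i k : ZMod N) {τ : ℂ} (hτ : 0 < τ.im) :
    F i k τ = G i k τ := by
  let P a b := ∀ τ : ℂ, 0 < τ.im → partialInvDFT F a τ b = partialInvDFT G a τ b
  have hP : ∀ a b, P a b := by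
    refine ZMod.pair_induction (fun b τ hτ ↦ ?_) (fun a b h τ hτ ↦ ?_) (fun a b h τ hτ ↦ ?_)
    · simp only [partialInvDFT, h0 _ τ hτ]
    · have h1 : 0 < (τ + 1).im := by simpa using hτ
      rw [← hF.partialInvDFT_add_one a b hτ, ← hG.partialInvDFT_add_one a b hτ, h _ h1]
    · rw [← hF.partialInvDFT_neg_one_div a b hτ, ← hG.partialInvDFT_neg_one_div a b hτ,
        h _ (im_neg_one_div_pos hτ)]
  have hrow : (fun l ↦ F i l τ) = fun l ↦ G i l τ :=
    (LinearEquiv.symm dft).injective (funext fun b ↦ hP i b τ hτ)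
  exact congrFun hrow k

end IsRhoMModular

lemma isRhoMModular_of_e {N : ℕ} [NeZero N] {F : ZMod N → ZMod N → ℂ → ℂ}
    (hT : ∀ (i k : ZMod N) (τ : ℂ), 0 < τ.im →
      F i k (τ + 1) = e (((i.val * k.val : ℕ) : ℂ) / N) * F i k τ)
    (hS : ∀ (i k : ZMod N) (τ : ℂ), 0 < τ.im →
      F i k (-1 / τ) = (1 / N) * ∑ j : ZMod N, ∑ l : ZMod N,
        e ((-((j.val * k.val : ℕ) : ℂ) - ((i.val * l.val : ℕ) : ℂ)) / N) * F j l τ) :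
    IsRhoMModular N F where
  add_one i k τ hτ := by
    rw [hT i k τ hτ, e_natCast_div, Nat.cast_mul, natCast_zmod_val, natCast_zmod_val]
  neg_one_div i k τ hτ := by
    rw [hS i k τ hτ, one_div]
    congr 1
    simp only [dft_apply, smul_eq_mul, Finset.mul_sum]
    refine Finset.sum_congr rfl fun j _ ↦ Finset.sum_congr rfl fun l _ ↦ ?_
    have kernel : e ((-((j.val * k.val : ℕ) : ℂ) - ((i.val * l.val : ℕ) : ℂ)) / N) =
        stdAddChar (-(j * k)) * stdAddChar (-(l * i)) := by
      rw [← AddChar.map_add_eq_mul]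
      have := e_intCast_div N (-(j.val * k.val : ℤ) - i.val * l.val)
      push_cast [natCast_zmod_val] at this ⊢
      rw [this]
      congr 1
      ring
    rw [kernel, mul_assoc]

/-- a vector-valued modular function of type `ρ_M`
(`M = II_{1,1}(N) × II_{1,1}`, components indexed by `ℤ/N × ℤ/N`, satisfying the `T`- and
`S`-transformation laws) is uniquely determined by its components `F_{0,i}`, `i ∈ ℤ/N`:
if `F` and `G` both satisfy the transformation laws and agree on the components `(0, i)`,
then they are equal.  In particular (taking `G = 0`), if `F_{0,i} = 0` for all `i` then
`F = 0`. -/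
theorem stmt_5 (N : ℕ) [NeZero N] (F G : ZMod N → ZMod N → ℂ → ℂ)
    (hFT : ∀ (i k : ZMod N) (τ : ℂ), 0 < τ.im →
      F i k (τ + 1) = e (((i.val * k.val : ℕ) : ℂ) / N) * F i k τ)
    (hFS : ∀ (i k : ZMod N) (τ : ℂ), 0 < τ.im →
      F i k (-1 / τ) = (1 / N) * ∑ j : ZMod N, ∑ l : ZMod N,
        e ((-((j.val * k.val : ℕ) : ℂ) - ((i.val * l.val : ℕ) : ℂ)) / N) * F j l τ)
    (hGT : ∀ (i k : ZMod N) (τ : ℂ), 0 < τ.im →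
      G i k (τ + 1) = e (((i.val * k.val : ℕ) : ℂ) / N) * G i k τ)
    (hGS : ∀ (i k : ZMod N) (τ : ℂ), 0 < τ.im →
      G i k (-1 / τ) = (1 / N) * ∑ j : ZMod N, ∑ l : ZMod N,
        e ((-((j.val * k.val : ℕ) : ℂ) - ((i.val * l.val : ℕ) : ℂ)) / N) * G j l τ)
    (h0 : ∀ (i : ZMod N) (τ : ℂ), 0 < τ.im → F 0 i τ = G 0 i τ) :
    ∀ (i k : ZMod N) (τ : ℂ), 0 < τ.im → F i k τ = G i k τ :=
  fun i k _ hτ ↦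
    (isRhoMModular_of_e hFT hFS).eq_of_row_zero_eq (isRhoMModular_of_e hGT hGS) h0 i k hτ
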